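/- arXiv:2510.24600 — 2 statements merged into one kernel-verified Lean document; each statement's English description precedes it below -/
import Mathlib

section
/- Lower bound (2.11) for the delayed renewal function: For every t > 0, H^{(d)}(t) ≥ t/a₁ − (1 − F^{(d)}(t)) · t/a₁ − a₁^{(d)}/a₁. -/
/-!
For any real sequence `x` with partial sums `s n = ∑_{k<n} x k`, induction on `m` gives
`min (s m) t ≤ ∑_{n<m, s n ≤ t} x n`. Taking `x = ζ ω` and integrating, the independence of
`ζ n` from the event `{S n ≤ t}` turns the right side into `a₁⁽ᵈ⁾ + a₁ ∑_{1≤n<m} P(S n ≤ t)`,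
while the left side is at least `t (1 - P(S m ≤ t))`. A Chernoff bound with `E e^{-ζ₁} < 1`
makes `P(S n ≤ t)` geometrically small, so `H⁽ᵈ⁾(t) = ∑_{n≥1} P(S n ≤ t)` and letting `m → ∞`
yields the Wald-type bound `t ≤ a₁⁽ᵈ⁾ + a₁ H⁽ᵈ⁾(t)`; the claim follows since `F⁽ᵈ⁾(t) ≤ 1`.
-/

open MeasureTheory ProbabilityTheory Real Filter Finset
open scoped ENNReal

-- Both sides vanish for infinite `s`, which is why `integral_ncard_setOf_mem` needs no
-- a.e. finiteness of `{i | x ∈ A i}`.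
theorem Set.ncard_eq_toReal_encard {α : Type*} (s : Set α) :
    (s.ncard : ℝ) = (s.encard : ℝ≥0∞).toReal := by
  rcases s.finite_or_infinite with hs | hs
  · rw [← hs.cast_ncard_eq]; simp
  · simp [hs.ncard, hs.encard_eq]

theorem tsum_indicator_one_eq_encard {α ι : Type*} (A : ι → Set α) (x : α) :
    ∑' i, (A i).indicator 1 x = ({i | x ∈ A i}.encard : ℝ≥0∞) := by
  rw [← ENNReal.tsum_set_one, _root_.tsum_subtype {i | x ∈ A i} fun _ => (1 : ℝ≥0∞)]
  congr with i

theorem Set.ncard_setOf_one_le_and (p : ℕ → Prop) :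
    {n | 1 ≤ n ∧ p n}.ncard = {n | p (n + 1)}.ncard := by
  have h : {n | 1 ≤ n ∧ p n} = (· + 1) '' {n | p (n + 1)} := by
    ext n
    cases n <;> simp
  rw [h, Set.ncard_image_of_injective _ (add_left_injective 1)]

theorem min_sum_range_le_sum_ite (x : ℕ → ℝ) (t : ℝ) (m : ℕ) :
    min (∑ k ∈ range m, x k) t ≤
      ∑ n ∈ range m, if ∑ k ∈ range n, x k ≤ t then x n else 0 := by
  induction m with
  | zero => simp
  | succ m ih =>
    rw [sum_range_succ, sum_range_succ]
    split_ifs with h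
    · linarith [min_le_left (∑ k ∈ range m, x k + x m) t, min_eq_left h]
    · linarith [min_le_right (∑ k ∈ range m, x k + x m) t, min_eq_right (not_le.1 h).le]

namespace MeasureTheory

variable {α : Type*} [MeasurableSpace α] {μ : Measure α}

theorem integral_pos_of_ae_pos [NeZero μ] {f : α → ℝ} (hfi : Integrable f μ)
    (hf : ∀ᵐ x ∂μ, 0 < f x) : 0 < ∫ x, f x ∂μ := by
  rw [integral_pos_iff_support_of_nonneg_ae (hf.mono fun _ hx => hx.le) hfi]
  refine pos_iff_ne_zero.2 fun h0 => NeZero.ne μ (ae_eq_bot.1 (eventually_false_iff_eq_bot.1 ?_))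
  filter_upwards [hf, measure_eq_zero_iff_ae_notMem.1 h0] with x hx h
  exact h hx.ne'

theorem sub_mul_measureReal_le_integral_min [IsProbabilityMeasure μ] {S : α → ℝ}
    (hS : Measurable S) (h : ∀ᵐ x ∂μ, 0 ≤ S x) {t : ℝ} (ht : 0 ≤ t) :
    t - t * μ.real {x | S x ≤ t} ≤ ∫ x, min (S x) t ∂μ := by
  have hA : MeasurableSet {x | S x ≤ t} := measurableSet_le hS measurable_const
  have hind : Integrable ({x | S x ≤ t}.indicator fun _ => t) μ :=
    (integrable_const t).indicator hA
  have hmin : Integrable (fun x => min (S x) t) μ := by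
    refine .of_mem_Icc 0 t (hS.min measurable_const).aemeasurable ?_
    filter_upwards [h] with x hx
    exact ⟨le_min hx ht, min_le_right _ _⟩
  calc t - t * μ.real {x | S x ≤ t}
      = ∫ x, (t - {x | S x ≤ t}.indicator (fun _ => t) x) ∂μ := by
        rw [integral_sub (integrable_const t) hind, integral_indicator_const _ hA]
        simp [mul_comm]
    _ ≤ ∫ x, min (S x) t ∂μ := by
        refine integral_mono_ae ((integrable_const t).sub hind) hmin ?_
        filter_upwards [h] with x hx
        by_cases hxt : S x ≤ t
        · simp [hxt, hx]
        · simp [hxt, (not_le.1 hxt).le]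

theorem integral_ncard_setOf_mem {ι : Type*} [Countable ι] [IsFiniteMeasure μ] {A : ι → Set α}
    (hA : ∀ i, MeasurableSet (A i)) (hsum : Summable fun i => μ.real (A i)) :
    ∫ x, ({i | x ∈ A i}.ncard : ℝ) ∂μ = ∑' i, μ.real (A i) := by
  have hsum' : ∑' i, μ (A i) ≠ ∞ := by
    rw [← tsum_congr fun i => ofReal_measureReal (measure_ne_top μ (A i)),
      ← ENNReal.ofReal_tsum_of_nonneg (fun _ => measureReal_nonneg) hsum]
    exact ENNReal.ofReal_ne_top
  have hmeas : Measurable fun x => ∑' i, (A i).indicator (1 : α → ℝ≥0∞) x :=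
    .tsum fun i => measurable_one.indicator (hA i)
  have hlint : ∫⁻ x, ∑' i, (A i).indicator 1 x ∂μ = ∑' i, μ (A i) := by
    rw [lintegral_tsum fun i => (measurable_one.indicator (hA i)).aemeasurable]
    simp [lintegral_indicator (hA _)]
  simp_rw [Set.ncard_eq_toReal_encard, ← tsum_indicator_one_eq_encard]
  rw [integral_toReal hmeas.aemeasurable (ae_lt_top hmeas (hlint ▸ hsum')), hlint,
    ENNReal.tsum_toReal_eq fun i => ?_]
  · rfl
  · exact measure_ne_top μ (A i)

end MeasureTheory

namespace ProbabilityTheory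

variable {Ω : Type*} [MeasurableSpace Ω] {μ : Measure Ω}

theorem integrable_exp_mul_of_nonpos_of_nonneg [IsFiniteMeasure μ] {X : Ω → ℝ} {s : ℝ}
    (hX : AEMeasurable X μ) (hs : s ≤ 0) (h : ∀ᵐ ω ∂μ, 0 ≤ X ω) :
    Integrable (fun ω => exp (s * X ω)) μ := by
  refine .of_mem_Icc 0 1 (measurable_exp.comp_aemeasurable (hX.const_mul s)) ?_
  filter_upwards [h] with ω hω
  exact ⟨(exp_pos _).le, exp_le_one_iff.2 (mul_nonpos_of_nonpos_of_nonneg hs hω)⟩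

theorem mgf_lt_one_of_pos [IsProbabilityMeasure μ] {X : Ω → ℝ} {s : ℝ}
    (hX : AEMeasurable X μ) (hs : s < 0) (h : ∀ᵐ ω ∂μ, 0 < X ω) : mgf X μ s < 1 := by
  have hint := integrable_exp_mul_of_nonpos_of_nonneg hX hs.le (h.mono fun _ hω => hω.le)
  have hpos : 0 < ∫ ω, (1 - exp (s * X ω)) ∂μ := by
    refine integral_pos_of_ae_pos ((integrable_const 1).sub hint) ?_
    filter_upwards [h] with ω hω
    simpa using mul_neg_of_neg_of_pos hs hω
  rw [integral_sub (integrable_const 1) hint] at hpos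
  simpa [mgf] using hpos

variable {X : ℕ → Ω → ℝ}

theorem integral_indicator_sum_range_le [IsProbabilityMeasure μ] (hindep : iIndepFun X μ)
    (hmeas : ∀ k, Measurable (X k)) (n : ℕ) (t : ℝ) :
    ∫ ω, {ω | ∑ k ∈ range n, X k ω ≤ t}.indicator (X n) ω ∂μ =
      (∫ ω, X n ω ∂μ) * μ.real {ω | ∑ k ∈ range n, X k ω ≤ t} := by
  have hS : Measurable (∑ k ∈ range n, X k) := by fun_prop
  have hφ : Measurable ({s : ℝ | s ≤ t}.indicator (1 : ℝ → ℝ)) :=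
    measurable_one.indicator measurableSet_Iic
  have hindep' : IndepFun (X n) ({s : ℝ | s ≤ t}.indicator 1 ∘ ∑ k ∈ range n, X k) μ :=
    (hindep.indepFun_finsetSum_of_notMem hmeas notMem_range_self).symm.comp measurable_id hφ
  have := hindep'.integral_fun_mul_eq_mul_integral (hmeas n).aestronglyMeasurable
    (hφ.comp hS).aestronglyMeasurable
  convert this using 1
  · congr 1 with ω
    by_cases h : ∑ k ∈ range n, X k ω ≤ t <;> simp [h]
  · rw [← integral_indicator_one (measurableSet_le (by fun_prop) measurable_const)]
    congr 2 with ω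
    simp [Set.indicator_apply]

theorem summable_measureReal_sum_range_succ_le [IsProbabilityMeasure μ]
    (hindep : iIndepFun X μ) (hmeas : ∀ k, Measurable (X k))
    (hident : ∀ k, 1 ≤ k → IdentDistrib (X k) (X 1) μ μ) (hpos : ∀ k, ∀ᵐ ω ∂μ, 0 < X k ω)
    (t : ℝ) : Summable fun n => μ.real {ω | ∑ k ∈ range (n + 1), X k ω ≤ t} := by
  set r := mgf (X 1) μ (-1)
  have hr : r < 1 := mgf_lt_one_of_pos (hmeas 1).aemeasurable (by norm_num) (hpos 1)
  have hmgf : ∀ n, mgf (∑ k ∈ range (n + 1), X k) μ (-1) ≤ r ^ n := fun n => by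
    rw [hindep.mgf_sum hmeas, prod_range_succ', prod_congr rfl fun k _ =>
      mgf_congr_of_identDistrib _ _ (hident (k + 1) le_add_self) _, prod_const, card_range]
    exact mul_le_of_le_one_right (pow_nonneg mgf_nonneg n)
      (mgf_lt_one_of_pos (hmeas 0).aemeasurable (by norm_num) (hpos 0)).le
  have hchernoff : ∀ n, μ.real {ω | ∑ k ∈ range (n + 1), X k ω ≤ t} ≤ exp t * r ^ n := by
    intro n
    have hnonneg : ∀ᵐ ω ∂μ, 0 ≤ (∑ k ∈ range (n + 1), X k) ω := by
      filter_upwards [ae_all_iff.2 hpos] with ω hω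
      simpa using sum_nonneg fun k _ => (hω k).le
    have := measure_le_le_exp_mul_mgf t (by norm_num : (-1 : ℝ) ≤ 0)
      (integrable_exp_mul_of_nonpos_of_nonneg (by fun_prop) (by norm_num) hnonneg)
    simp only [neg_neg, one_mul, Finset.sum_apply] at this
    exact this.trans (mul_le_mul_of_nonneg_left (hmgf n) (exp_pos t).le)
  exact .of_nonneg_of_le (fun _ => measureReal_nonneg) hchernoff
    ((summable_geometric_of_lt_one mgf_nonneg hr).mul_left _)

theorem integral_min_sum_range_le_sum [IsFiniteMeasure μ] (hmeas : ∀ k, Measurable (X k))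
    (hint : ∀ k, Integrable (X k) μ) (t : ℝ) (m : ℕ) :
    ∫ ω, min (∑ k ∈ range m, X k ω) t ∂μ ≤
      ∑ n ∈ range m, ∫ ω, {ω | ∑ k ∈ range n, X k ω ≤ t}.indicator (X n) ω ∂μ := by
  have hind : ∀ n, Integrable ({ω | ∑ k ∈ range n, X k ω ≤ t}.indicator (X n)) μ :=
    fun n => (hint n).indicator (measurableSet_le (by fun_prop) measurable_const)
  rw [← integral_finsetSum _ fun n _ => hind n]
  refine integral_mono ((integrable_finsetSum _ fun k _ => hint k).inf (integrable_const t))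
    (integrable_finsetSum _ fun n _ => hind n) fun ω => ?_
  simpa [Set.indicator_apply] using min_sum_range_le_sum_ite (X · ω) t m

theorem le_integral_add_mul_tsum_measureReal_sum_range_succ_le [IsProbabilityMeasure μ]
    (hindep : iIndepFun X μ) (hmeas : ∀ k, Measurable (X k))
    (hident : ∀ k, 1 ≤ k → IdentDistrib (X k) (X 1) μ μ) (hpos : ∀ k, ∀ᵐ ω ∂μ, 0 < X k ω)
    (hint₀ : Integrable (X 0) μ) (hint₁ : Integrable (X 1) μ) {t : ℝ} (ht : 0 ≤ t) :
    t ≤ ∫ ω, X 0 ω ∂μ +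
      (∫ ω, X 1 ω ∂μ) * ∑' n, μ.real {ω | ∑ k ∈ range (n + 1), X k ω ≤ t} := by
  set q := fun n => μ.real {ω | ∑ k ∈ range (n + 1), X k ω ≤ t}
  have hq := summable_measureReal_sum_range_succ_le hindep hmeas hident hpos t
  have hint : ∀ k, Integrable (X k) μ
    | 0 => hint₀
    | k + 1 => (hident (k + 1) le_add_self).integrable_iff.2 hint₁
  have hbound : ∀ m, t - t * q m ≤ ∫ ω, X 0 ω ∂μ + (∫ ω, X 1 ω ∂μ) * ∑ n ∈ range m, q n :=
    fun m => calc
      t - t * q m ≤ ∫ ω, min (∑ k ∈ range (m + 1), X k ω) t ∂μ := by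
        refine sub_mul_measureReal_le_integral_min (by fun_prop) ?_ ht
        filter_upwards [ae_all_iff.2 hpos] with ω hω
        exact sum_nonneg fun k _ => (hω k).le
      _ ≤ _ := integral_min_sum_range_le_sum hmeas hint t (m + 1)
      _ = _ := by
        rw [sum_range_succ', mul_sum, add_comm]
        simp_rw [integral_indicator_sum_range_le hindep hmeas]
        congr 1
        · simp [ht]
        · exact sum_congr rfl fun n _ => by rw [(hident (n + 1) le_add_self).integral_eq]
  have hlhs : Tendsto (fun m => t - t * q m) atTop (nhds t) := by
    simpa using (hq.tendsto_atTop_zero.const_mul t).const_sub t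
  exact le_of_tendsto_of_tendsto' hlhs
    ((hq.hasSum.tendsto_sum_nat.const_mul _).const_add _) hbound

end ProbabilityTheory

/-- **Lower bound (2.11) for the delayed renewal function.**  Let `ζ 0 = ζ₁⁽ᵈ⁾` (delayed
term, distribution function `F⁽ᵈ⁾`, mean `a₁⁽ᵈ⁾`) and `ζ k`, `k ≥ 1`, i.i.d. positive
with mean `a₁`, all independent.  With `N⁽ᵈ⁾(t) = #{n ≥ 1 : ∑_{k<n} ζ k ≤ t}` and
`H⁽ᵈ⁾(t) = E N⁽ᵈ⁾(t)`, for every `t > 0`,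
`H⁽ᵈ⁾(t) ≥ t/a₁ - (1 - F⁽ᵈ⁾(t)) t/a₁ - a₁⁽ᵈ⁾/a₁`. -/
theorem delayed_renewal_function_lower_bound
    {Ω : Type*} [MeasureSpace Ω] [IsProbabilityMeasure (ℙ : Measure Ω)]
    (ζ : ℕ → Ω → ℝ)
    (hmeas : ∀ k, Measurable (ζ k))
    (hindep : iIndepFun ζ ℙ)
    (hident : ∀ k, 1 ≤ k → IdentDistrib (ζ k) (ζ 1) ℙ ℙ)
    (hpos : ∀ k, ∀ᵐ ω ∂ℙ, 0 < ζ k ω)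
    (a1 : ℝ) (ha1 : a1 = ∫ ω, ζ 1 ω ∂ℙ) (hζ1int : Integrable (ζ 1) ℙ)
    (a1d : ℝ) (ha1d : a1d = ∫ ω, ζ 0 ω ∂ℙ) (hζdint : Integrable (ζ 0) ℙ)
    (Nd : ℝ → Ω → ℕ)
    (hNd : ∀ t ω, Nd t ω =
      Set.ncard {n : ℕ | 1 ≤ n ∧ (∑ k ∈ Finset.range n, ζ k ω) ≤ t})
    (Hd : ℝ → ℝ) (hHd : ∀ t, Hd t = ∫ ω, (Nd t ω : ℝ) ∂ℙ)
    (Fd : ℝ → ℝ) (hFd : ∀ y, Fd y = (ℙ {ω | ζ 0 ω ≤ y}).toReal)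
    (t : ℝ) (ht : 0 < t) :
    Hd t ≥ t / a1 - (1 - Fd t) * (t / a1) - a1d / a1 := by
  have ha1_pos : 0 < a1 := ha1 ▸ integral_pos_of_ae_pos hζ1int (hpos 1)
  have hHd_eq : Hd t = ∑' n, (ℙ : Measure Ω).real {ω | ∑ k ∈ range (n + 1), ζ k ω ≤ t} := by
    simp_rw [hHd, hNd, Set.ncard_setOf_one_le_and]
    exact integral_ncard_setOf_mem
      (fun n => measurableSet_le (Finset.measurable_sum _ fun k _ => hmeas k) measurable_const)
      (summable_measureReal_sum_range_succ_le hindep hmeas hident hpos t)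
  have hwald := le_integral_add_mul_tsum_measureReal_sum_range_succ_le hindep hmeas hident hpos
    hζdint hζ1int ht.le
  rw [← ha1, ← ha1d, ← hHd_eq] at hwald
  have hFd_le : Fd t ≤ 1 := hFd t ▸ measureReal_le_one
  have hdefect : 0 ≤ (1 - Fd t) * (t / a1) := mul_nonneg (by linarith) (by positivity)
  calc t / a1 - (1 - Fd t) * (t / a1) - a1d / a1 ≤ (t - a1d) / a1 := by rw [sub_div]; linarith
    _ ≤ Hd t := by rw [div_le_iff₀ ha1_pos]; linarith
end

section
/- Bound (2.12) on the first moment of V^{(d)}: For every x > 0 and q ∈ (0,1), with V^{(d)} = x − q* N^{(d)}(a₁ x/q*), one has E V^{(d)} ≤ q* a₁^{(d)}/a₁ + (1 − F^{(d)}(a₁ x/q*)) · x. -/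
/-!
The renewal epoch following `t` overshoots it: `t < S_{N(t)+1} = ζ₀ + ∑_{k < N(t)} ζ_{k+1}`,
where `N(t)` is finite almost surely by the strong law of large numbers. The event
`{k < N(t)} = {S_{k+1} ≤ t}` depends only on `ζ₀, …, ζ_k`, hence is independent of `ζ_{k+1}`,
so taking expectations (Wald's argument) gives `t ≤ a₁⁽ᵈ⁾ + a₁ E N(t)`. For `t = a₁ x / q*` this
reads `E V⁽ᵈ⁾ ≤ q* a₁⁽ᵈ⁾ / a₁`, and `(1 - F⁽ᵈ⁾(t)) x` is nonnegative.
-/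

open MeasureTheory ProbabilityTheory Filter Finset Function
open scoped ENNReal

lemma Monotone.le_iff_lt_ncard {α : Type*} [LinearOrder α] {s : ℕ → α} (hs : Monotone s)
    {t : α} (h : ∃ n, t < s n) (k : ℕ) : s (k + 1) ≤ t ↔ k < {n | 1 ≤ n ∧ s n ≤ t}.ncard := by
  classical
  have h' : ∃ k, t < s (k + 1) := h.imp fun n hn ↦ hn.trans_le (hs n.le_succ)
  have hle : ∀ k, s (k + 1) ≤ t ↔ k < Nat.find h' := fun k ↦
    ⟨fun hk ↦ lt_of_not_ge fun hm ↦ (Nat.find_spec h').not_ge ((hs (by omega)).trans hk),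
      fun hk ↦ not_lt.1 (Nat.find_min h' hk)⟩
  have hIcc : ({n | 1 ≤ n ∧ s n ≤ t} : Set ℕ) = (Finset.Icc 1 (Nat.find h') : Set ℕ) := by
    ext n
    rcases n with _ | n
    · simp
    · simp only [Set.mem_ofPred_eq, coe_Icc, Set.mem_Icc, hle n]
      omega
  rw [hle, hIcc, Set.ncard_coe_finset, Nat.card_Icc, Nat.add_sub_cancel]

lemma tsum_indicator_eq_sum_range {Ω : Type*} {A : ℕ → Set Ω} {f : ℕ → Ω → ℝ≥0∞} {ω : Ω}
    {n : ℕ} (h : ∀ k, ω ∈ A k ↔ k < n) :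
    ∑' k, (A k).indicator (f k) ω = ∑ k ∈ range n, f k ω := by
  rw [tsum_eq_sum fun k hk ↦ Set.indicator_of_notMem (fun hA ↦ hk (mem_range.2 ((h k).1 hA))) _]
  exact sum_congr rfl fun k hk ↦ Set.indicator_of_mem ((h k).2 (mem_range.1 hk)) _

section

variable {Ω : Type*} [MeasurableSpace Ω] {μ : Measure Ω}

lemma integral_pos_of_ae_pos [NeZero μ] {f : Ω → ℝ} (hf : ∀ᵐ ω ∂μ, 0 < f ω)
    (hfi : Integrable f μ) : 0 < ∫ ω, f ω ∂μ := by
  rw [integral_pos_iff_support_of_nonneg_ae (hf.mono fun _ h ↦ h.le) hfi, pos_iff_ne_zero]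
  intro h
  obtain ⟨ω, hω, hω0⟩ := (hf.and (measure_eq_zero_iff_ae_notMem.1 h)).exists
  exact hω0 hω.ne'

lemma ae_tendsto_sum_range_atTop {X : ℕ → Ω → ℝ} (hint : Integrable (X 0) μ)
    (hindep : Pairwise ((· ⟂ᵢ[μ] ·) on X)) (hident : ∀ i, IdentDistrib (X i) (X 0) μ μ)
    (hmean : 0 < μ[X 0]) :
    ∀ᵐ ω ∂μ, Tendsto (fun n ↦ ∑ i ∈ range n, X i ω) atTop atTop := by
  filter_upwards [strong_law_ae_real X hint hindep hident] with ω hω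
  refine (hω.pos_mul_atTop hmean tendsto_natCast_atTop_atTop).congr' ?_
  filter_upwards [eventually_ne_atTop 0] with n hn
  exact div_mul_cancel₀ _ (Nat.cast_ne_zero.2 hn)

lemma ae_sum_range_succ_le_iff_lt_ncard {ζ : ℕ → Ω → ℝ} (hindep : iIndepFun ζ μ)
    (hident : ∀ k, IdentDistrib (ζ (k + 1)) (ζ 1) μ μ) (hnonneg : ∀ k, 0 ≤ᵐ[μ] ζ k)
    (hint : Integrable (ζ 1) μ) (hmean : 0 < μ[ζ 1]) (t : ℝ) :
    ∀ᵐ ω ∂μ, ∀ k, ∑ i ∈ range (k + 1), ζ i ω ≤ t ↔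
      k < {n | 1 ≤ n ∧ ∑ i ∈ range n, ζ i ω ≤ t}.ncard := by
  filter_upwards [ae_tendsto_sum_range_atTop (X := fun i ↦ ζ (i + 1)) hint
    (fun i j hij ↦ hindep.indepFun (by simpa using hij)) hident hmean,
    ae_all_iff.2 hnonneg] with ω hω hnonneg
  obtain ⟨n, hn⟩ := (hω.eventually_gt_atTop (t - ζ 0 ω)).exists
  refine Monotone.le_iff_lt_ncard (s := fun n ↦ ∑ i ∈ range n, ζ i ω)
    (monotone_nat_of_le_succ fun n ↦ ?_) ⟨n + 1, ?_⟩
  · simpa [sum_range_succ] using hnonneg n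
  · rw [sum_range_succ']; linarith

lemma ProbabilityTheory.IndepFun.lintegral_indicator_preimage {β : Type*} [MeasurableSpace β]
    {f : Ω → ℝ≥0∞} {g : Ω → β} (hfg : f ⟂ᵢ[μ] g) (hf : Measurable f) (hg : Measurable g)
    {s : Set β} (hs : MeasurableSet s) :
    ∫⁻ ω, (g ⁻¹' s).indicator f ω ∂μ = (∫⁻ ω, f ω ∂μ) * μ (g ⁻¹' s) := by
  have hind : Measurable (s.indicator (1 : β → ℝ≥0∞)) := measurable_one.indicator hs
  have := lintegral_mul_eq_lintegral_mul_lintegral_of_indepFun hf (hind.comp hg)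
    (hfg.comp measurable_id hind)
  convert this using 2
  · ext ω
    by_cases hω : g ω ∈ s <;> simp [hω]
  · rw [← lintegral_indicator_one (hg hs)]
    rfl

theorem ofReal_le_lintegral_add_mul_lintegral_renewalCount {ζ : ℕ → Ω → ℝ}
    (hmeas : ∀ k, Measurable (ζ k)) (hindep : iIndepFun ζ μ) (hnonneg : ∀ k, 0 ≤ᵐ[μ] ζ k)
    {c : ℝ≥0∞} (hmean : ∀ k, ∫⁻ ω, ENNReal.ofReal (ζ (k + 1) ω) ∂μ = c) {t : ℝ} {N : Ω → ℕ}
    (hN : ∀ᵐ ω ∂μ, ∀ k, ∑ i ∈ range (k + 1), ζ i ω ≤ t ↔ k < N ω) :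
    ENNReal.ofReal t ≤ ∫⁻ ω, ENNReal.ofReal (ζ 0 ω) ∂μ + c * ∫⁻ ω, (N ω : ℝ≥0∞) ∂μ := by
  have := hindep.isProbabilityMeasure
  set S : ℕ → Ω → ℝ := fun k ω ↦ ∑ i ∈ range (k + 1), ζ i ω
  have hS : ∀ k, Measurable (S k) := fun k ↦ Finset.measurable_sum _ fun i _ ↦ hmeas i
  set A : ℕ → Set Ω := fun k ↦ S k ⁻¹' Set.Iic t
  have hA : ∀ k, MeasurableSet (A k) := fun k ↦ hS k measurableSet_Iic
  have hcount : ∀ᵐ ω ∂μ, (N ω : ℝ≥0∞) = ∑' k, (A k).indicator 1 ω := by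
    filter_upwards [hN] with ω hω
    simp [tsum_indicator_eq_sum_range (A := A) hω]
  have hovershoot : ∀ᵐ ω ∂μ, ENNReal.ofReal t ≤
      ENNReal.ofReal (ζ 0 ω) + ∑' k, (A k).indicator (fun ω ↦ ENNReal.ofReal (ζ (k + 1) ω)) ω := by
    filter_upwards [hN, ae_all_iff.2 hnonneg] with ω hω hpos
    rw [tsum_indicator_eq_sum_range (A := A) hω,
      ← ENNReal.ofReal_sum_of_nonneg fun k _ ↦ hpos (k + 1),
      ← ENNReal.ofReal_add (hpos 0) (sum_nonneg fun k _ ↦ hpos (k + 1)), add_comm,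
      ← sum_range_succ' (ζ · ω)]
    exact ENNReal.ofReal_le_ofReal (not_le.1 ((hω (N ω)).not.2 (lt_irrefl _))).le
  have hterm : ∀ k, ∫⁻ ω, (A k).indicator (fun ω ↦ ENNReal.ofReal (ζ (k + 1) ω)) ω ∂μ
      = c * μ (A k) := fun k ↦ by
    have hindepk : ζ (k + 1) ⟂ᵢ[μ] S k := by
      simpa only [S, ← Finset.sum_fn] using (hindep.indepFun_sum_range_succ hmeas (k + 1)).symm
    rw [← hmean k]
    exact (hindepk.comp ENNReal.measurable_ofReal measurable_id).lintegral_indicator_preimage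
      (hmeas (k + 1)).ennreal_ofReal (hS k) measurableSet_Iic
  calc ENNReal.ofReal t = ∫⁻ _, ENNReal.ofReal t ∂μ := by simp
    _ ≤ ∫⁻ ω, ENNReal.ofReal (ζ 0 ω) +
          ∑' k, (A k).indicator (fun ω ↦ ENNReal.ofReal (ζ (k + 1) ω)) ω ∂μ :=
        lintegral_mono_ae hovershoot
    _ = ∫⁻ ω, ENNReal.ofReal (ζ 0 ω) ∂μ + c * ∑' k, μ (A k) := by
        rw [lintegral_add_left (hmeas 0).ennreal_ofReal,
          lintegral_tsum fun k ↦ ((hmeas (k + 1)).ennreal_ofReal.indicator (hA k)).aemeasurable]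
        simp only [hterm, ENNReal.tsum_mul_left]
    _ = ∫⁻ ω, ENNReal.ofReal (ζ 0 ω) ∂μ + c * ∫⁻ ω, (N ω : ℝ≥0∞) ∂μ := by
        rw [lintegral_congr_ae hcount,
          lintegral_tsum fun k ↦ (measurable_one.indicator (hA k)).aemeasurable]
        simp only [lintegral_indicator_one (hA _)]

lemma le_add_mul_integral_of_ofReal_le_lintegral {N : Ω → ℕ}
    (hN : Integrable (fun ω ↦ (N ω : ℝ)) μ) {t a b : ℝ} (ha : 0 ≤ a) (hb : 0 ≤ b)
    (h : ENNReal.ofReal t ≤ ENNReal.ofReal b + ENNReal.ofReal a * ∫⁻ ω, (N ω : ℝ≥0∞) ∂μ) :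
    t ≤ b + a * ∫ ω, (N ω : ℝ) ∂μ := by
  have hN0 : 0 ≤ ∫ ω, (N ω : ℝ) ∂μ := integral_nonneg fun _ ↦ Nat.cast_nonneg _
  have hI : ∫⁻ ω, (N ω : ℝ≥0∞) ∂μ = ENNReal.ofReal (∫ ω, (N ω : ℝ) ∂μ) := by
    simp [ofReal_integral_eq_lintegral_ofReal hN (ae_of_all _ fun _ ↦ Nat.cast_nonneg _)]
  rw [hI, ← ENNReal.ofReal_mul ha, ← ENNReal.ofReal_add hb (mul_nonneg ha hN0),
    ENNReal.ofReal_le_ofReal_iff'] at h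
  exact h.elim id fun ht ↦ ht.trans (by positivity)

lemma integral_sub_mul_le_of_ofReal_le_lintegral [IsProbabilityMeasure μ] {N : Ω → ℕ}
    {x q a b : ℝ} (hq : 0 < q) (ha : 0 < a) (hb : 0 ≤ b)
    (h : ENNReal.ofReal (a * x / q) ≤
      ENNReal.ofReal b + ENNReal.ofReal a * ∫⁻ ω, (N ω : ℝ≥0∞) ∂μ) :
    ∫ ω, (x - q * (N ω : ℝ)) ∂μ ≤ q * b / a := by
  by_cases hint : Integrable (fun ω ↦ x - q * (N ω : ℝ)) μ
  · have hNint : Integrable (fun ω ↦ (N ω : ℝ)) μ := by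
      simpa [hq.ne'] using ((integrable_const x).sub hint).const_mul q⁻¹
    have hI := le_add_mul_integral_of_ofReal_le_lintegral hNint ha.le hb h
    rw [integral_sub (integrable_const x) (hNint.const_mul q), integral_const_mul,
      integral_const, probReal_univ, one_smul, le_div_iff₀ ha]
    have hx : a * x / q * q = a * x := div_mul_cancel₀ _ hq.ne'
    nlinarith
  · rw [integral_undef hint]
    positivity

end

/-- **Bound (2.12) on the first moment of `V⁽ᵈ⁾`.**  Let `ζ 0 = ζ₁⁽ᵈ⁾` (delayed term,
distribution function `F⁽ᵈ⁾`, mean `a₁⁽ᵈ⁾`) and `ζ k`, `k ≥ 1`, i.i.d. positive with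
mean `a₁`, all independent; `q ∈ (0,1)`, `q* = -log (1-q)`,
`N⁽ᵈ⁾(t) = #{n ≥ 1 : ∑_{k<n} ζ k ≤ t}`.  For every `x > 0`, with
`V⁽ᵈ⁾ = x - q* N⁽ᵈ⁾(a₁ x/q*)`:
`E V⁽ᵈ⁾ ≤ q* a₁⁽ᵈ⁾/a₁ + (1 - F⁽ᵈ⁾(a₁ x/q*)) x`. -/
theorem delayed_renewal_V_first_moment_bound
    {Ω : Type*} [MeasureSpace Ω] [IsProbabilityMeasure (ℙ : Measure Ω)]
    (ζ : ℕ → Ω → ℝ)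
    (hmeas : ∀ k, Measurable (ζ k))
    (hindep : iIndepFun ζ ℙ)
    (hident : ∀ k, 1 ≤ k → IdentDistrib (ζ k) (ζ 1) ℙ ℙ)
    (hpos : ∀ k, ∀ᵐ ω ∂ℙ, 0 < ζ k ω)
    (q : ℝ) (hq0 : 0 < q) (hq1 : q < 1)
    (qs : ℝ) (hqs : qs = -Real.log (1 - q))
    (a1 : ℝ) (ha1 : a1 = ∫ ω, ζ 1 ω ∂ℙ) (hζ1int : Integrable (ζ 1) ℙ)
    (a1d : ℝ) (ha1d : a1d = ∫ ω, ζ 0 ω ∂ℙ) (hζdint : Integrable (ζ 0) ℙ)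
    (Nd : ℝ → Ω → ℕ)
    (hNd : ∀ t ω, Nd t ω =
      Set.ncard {n : ℕ | 1 ≤ n ∧ (∑ k ∈ Finset.range n, ζ k ω) ≤ t})
    (Fd : ℝ → ℝ) (hFd : ∀ y, Fd y = (ℙ {ω | ζ 0 ω ≤ y}).toReal)
    (x : ℝ) (hx : 0 < x) :
    ∫ ω, (x - qs * (Nd (a1 * x / qs) ω : ℝ)) ∂ℙ ≤
      qs * a1d / a1 + (1 - Fd (a1 * x / qs)) * x := by
  have hqs0 : 0 < qs := hqs ▸ neg_pos.2 (Real.log_neg (by linarith) (by linarith))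
  have hnonneg : ∀ k, 0 ≤ᵐ[ℙ] ζ k := fun k ↦ (hpos k).mono fun _ h ↦ h.le
  have ha1pos : 0 < a1 := ha1 ▸ integral_pos_of_ae_pos (hpos 1) hζ1int
  have ha1d0 : 0 ≤ a1d := ha1d ▸ integral_nonneg_of_ae (hnonneg 0)
  have hFd1 : 0 ≤ (1 - Fd (a1 * x / qs)) * x :=
    mul_nonneg (sub_nonneg.2 (hFd _ ▸ measureReal_le_one)) hx.le
  set t := a1 * x / qs
  have hmean : ∀ k, ∫⁻ ω, ENNReal.ofReal (ζ (k + 1) ω) = ENNReal.ofReal a1 := fun k ↦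
    ((hident (k + 1) (by omega)).comp ENNReal.measurable_ofReal).lintegral_eq.trans <| by
      rw [ha1, ofReal_integral_eq_lintegral_ofReal hζ1int (hnonneg 1)]; rfl
  have hζ0 : ∫⁻ ω, ENNReal.ofReal (ζ 0 ω) = ENNReal.ofReal a1d := by
    rw [ha1d, ofReal_integral_eq_lintegral_ofReal hζdint (hnonneg 0)]
  have hN : ∀ᵐ ω, ∀ k, ∑ i ∈ range (k + 1), ζ i ω ≤ t ↔ k < Nd t ω := by
    simpa only [hNd] using ae_sum_range_succ_le_iff_lt_ncard hindep
      (fun k ↦ hident (k + 1) (by omega)) hnonneg hζ1int (ha1 ▸ ha1pos) t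
  have hwald := hζ0 ▸
    ofReal_le_lintegral_add_mul_lintegral_renewalCount hmeas hindep hnonneg hmean hN
  have hV : ∫ ω, (x - qs * (Nd t ω : ℝ)) ≤ qs * a1d / a1 :=
    integral_sub_mul_le_of_ofReal_le_lintegral hqs0 ha1pos ha1d0 hwald
  linarith
end
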